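/- Let A be an n×m real matrix, p ∈ [1,∞), and suppose A = Uτ where U is an (α,β,p)-well-conditioned basis for the column space of A and τ is a d×m matrix. Let r > 0 and let i be an index with p_i ∈ (0,1) satisfying p_i ≥ r·‖U_{(i)}‖_p^p / |||U|||_p^p. Then for every x ∈ ℝ^m: |A_{(i)}x|^p / p_i ≤ (αβ)^p ‖Ax‖_p^p / r. -/

import Mathlib

open scoped BigOperators

/-- The entrywise `p`-norm of a vector: `(∑ i, |v i| ^ p) ^ (1/p)`. -/
noncomputable def pnorm (p : ℝ) {n : ℕ} (v : Fin n → ℝ) : ℝ :=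
  (∑ i, |v i| ^ p) ^ (1 / p)

/-- The dual norm of the `p`-norm: the max-norm if `p = 1`, else the `p/(p-1)`-norm. -/
noncomputable def qnorm (p : ℝ) {n : ℕ} (v : Fin n → ℝ) : ℝ :=
  if p = 1 then ⨆ i, |v i| else pnorm (p / (p - 1)) v

/-- The entrywise `p`-norm of a matrix. -/
noncomputable def mpnorm (p : ℝ) {n d : ℕ} (M : Matrix (Fin n) (Fin d) ℝ) : ℝ :=
  (∑ i, ∑ j, |M i j| ^ p) ^ (1 / p)

/-- `U` is an `(α, β, p)`-well-conditioned basis for the column space of `A`. -/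
def IsWCB (p α β : ℝ) {n m d : ℕ} (A : Matrix (Fin n) (Fin m) ℝ)
    (U : Matrix (Fin n) (Fin d) ℝ) : Prop :=
  LinearMap.range U.mulVecLin = LinearMap.range A.mulVecLin ∧
  mpnorm p U ≤ α ∧
  ∀ z : Fin d → ℝ, qnorm p z ≤ β * pnorm p (U.mulVec z)

/-- `S : Ω → Matrix` is a random `n × n` diagonal sampling matrix with probabilities `pr`:
its diagonal entries are mutually independent, with `S ω i i = (pr i) ^ (-1/p)` with
probability `pr i` and `S ω i i = 0` with probability `1 - pr i`. -/
structure IsSamplingMatrix {Ω : Type} [MeasurableSpace Ω] (μ : MeasureTheory.Measure Ω)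
    (p : ℝ) {n : ℕ} (pr : Fin n → ℝ) (S : Ω → Matrix (Fin n) (Fin n) ℝ) : Prop where
  offdiag : ∀ ω i j, i ≠ j → S ω i j = 0
  meas : ∀ i, Measurable fun ω => S ω i i
  prob_val : ∀ i, μ {ω | S ω i i = (pr i) ^ (-(1 / p))} = ENNReal.ofReal (pr i)
  prob_zero : ∀ i, μ {ω | S ω i i = 0} = ENNReal.ofReal (1 - pr i)
  indep : ProbabilityTheory.iIndepFun (fun i ω => S ω i i) μ

/-! Writing `A x = U (τ x)`, Hölder's inequality and well-conditioning give
`|A_(i) x| ≤ ‖U_(i)‖_p ‖τ x‖_q ≤ β ‖U_(i)‖_p ‖A x‖_p`. Raising this to the power `p` and using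
`r ‖U_(i)‖_p^p ≤ p_i |||U|||_p^p ≤ p_i α^p` yields the bound. -/

open Matrix

lemma pnorm_nonneg (p : ℝ) {n : ℕ} (v : Fin n → ℝ) : 0 ≤ pnorm p v := by
  unfold pnorm; positivity

lemma qnorm_nonneg (p : ℝ) {n : ℕ} (v : Fin n → ℝ) : 0 ≤ qnorm p v := by
  unfold qnorm
  split_ifs
  · exact Real.iSup_nonneg fun i => abs_nonneg _
  · exact pnorm_nonneg _ _

lemma mpnorm_nonneg (p : ℝ) {n d : ℕ} (M : Matrix (Fin n) (Fin d) ℝ) : 0 ≤ mpnorm p M := by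
  unfold mpnorm; positivity

lemma pnorm_rpow {p : ℝ} (hp : p ≠ 0) {n : ℕ} (v : Fin n → ℝ) :
    pnorm p v ^ p = ∑ i, |v i| ^ p := by
  rw [pnorm, one_div, Real.rpow_inv_rpow (by positivity) hp]

lemma mpnorm_rpow {p : ℝ} (hp : p ≠ 0) {n d : ℕ} (M : Matrix (Fin n) (Fin d) ℝ) :
    mpnorm p M ^ p = ∑ i, pnorm p (M i) ^ p := by
  rw [mpnorm, one_div, Real.rpow_inv_rpow (by positivity) hp]
  simp only [pnorm_rpow hp]

lemma abs_rpow_le_pnorm_rpow {p : ℝ} (hp : p ≠ 0) {n : ℕ} (v : Fin n → ℝ) (i : Fin n) :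
    |v i| ^ p ≤ pnorm p v ^ p := by
  rw [pnorm_rpow hp]
  exact Finset.single_le_sum (f := fun j => |v j| ^ p) (fun j _ => by positivity)
    (Finset.mem_univ i)

lemma pnorm_row_rpow_le_mpnorm_rpow {p : ℝ} (hp : p ≠ 0) {n d : ℕ}
    (M : Matrix (Fin n) (Fin d) ℝ) (i : Fin n) : pnorm p (M i) ^ p ≤ mpnorm p M ^ p := by
  rw [mpnorm_rpow hp]
  exact Finset.single_le_sum (f := fun j => pnorm p (M j) ^ p)
    (fun j _ => Real.rpow_nonneg (pnorm_nonneg p _) p) (Finset.mem_univ i)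

lemma abs_dotProduct_le_pnorm_mul_qnorm {p : ℝ} (hp : 1 ≤ p) {n : ℕ} (v z : Fin n → ℝ) :
    |v ⬝ᵥ z| ≤ pnorm p v * qnorm p z := by
  have hsum : |v ⬝ᵥ z| ≤ ∑ j, |v j| * |z j| := by
    simpa only [dotProduct, abs_mul] using Finset.abs_sum_le_sum_abs (fun j => v j * z j) .univ
  refine hsum.trans ?_
  rcases hp.eq_or_lt with rfl | hp
  · have hz : ∀ j, |z j| ≤ ⨆ i, |z i| := le_ciSup (Set.finite_range _).bddAbove
    simpa [qnorm, pnorm, Finset.sum_mul] using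
      Finset.sum_le_sum fun j _ => mul_le_mul_of_nonneg_left (hz j) (abs_nonneg (v j))
  · rw [qnorm, if_neg hp.ne', pnorm, pnorm]
    have holder :=
      Real.inner_le_Lp_mul_Lq .univ (fun j => |v j|) (fun j => |z j|) (.conjExponent hp)
    simp only [abs_abs] at holder
    exact holder

namespace IsWCB

variable {p α β : ℝ} {n m d : ℕ} {A : Matrix (Fin n) (Fin m) ℝ} {U : Matrix (Fin n) (Fin d) ℝ}

lemma alpha_nonneg (hU : IsWCB p α β A U) : 0 ≤ α :=
  (mpnorm_nonneg p U).trans hU.2.1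

lemma beta_nonneg (hU : IsWCB p α β A U) {z : Fin d → ℝ} (hz : 0 < pnorm p (U *ᵥ z)) : 0 ≤ β :=
  nonneg_of_mul_nonneg_left ((qnorm_nonneg p z).trans (hU.2.2 z)) hz

lemma abs_mulVec_apply_le (hp : 1 ≤ p) (hU : IsWCB p α β A U) {τ : Matrix (Fin d) (Fin m) ℝ}
    (hA : A = U * τ) (x : Fin m → ℝ) (i : Fin n) :
    |(A *ᵥ x) i| ≤ pnorm p (U i) * (β * pnorm p (A *ᵥ x)) := by
  have hAx : A *ᵥ x = U *ᵥ (τ *ᵥ x) := by rw [hA, mulVec_mulVec]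
  calc |(A *ᵥ x) i| = |U i ⬝ᵥ τ *ᵥ x| := by rw [hAx]; rfl
    _ ≤ pnorm p (U i) * qnorm p (τ *ᵥ x) := abs_dotProduct_le_pnorm_mul_qnorm hp _ _
    _ ≤ pnorm p (U i) * (β * pnorm p (A *ᵥ x)) := by
      rw [hAx]; exact mul_le_mul_of_nonneg_left (hU.2.2 _) (pnorm_nonneg _ _)

lemma mul_pnorm_row_rpow_le (hp : 0 < p) (hU : IsWCB p α β A U) {r π : ℝ} {i : Fin n}
    (hπ : r * pnorm p (U i) ^ p / mpnorm p U ^ p ≤ π) (hπ0 : 0 ≤ π) :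
    r * pnorm p (U i) ^ p ≤ π * α ^ p := by
  have hrow := pnorm_row_rpow_le_mpnorm_rpow hp.ne' U i
  have hα : mpnorm p U ^ p ≤ α ^ p := Real.rpow_le_rpow (mpnorm_nonneg p U) hU.2.1 hp.le
  rcases (Real.rpow_nonneg (mpnorm_nonneg p U) p).eq_or_lt with h0 | hpos
  · -- `hπ` is void here (division by zero), but then the row vanishes.
    have hUi : pnorm p (U i) ^ p = 0 :=
      le_antisymm (h0 ▸ hrow) (Real.rpow_nonneg (pnorm_nonneg p _) p)
    rw [hUi, mul_zero]
    exact mul_nonneg hπ0 (Real.rpow_nonneg hU.alpha_nonneg p)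
  · calc r * pnorm p (U i) ^ p ≤ π * mpnorm p U ^ p := (div_le_iff₀ hpos).1 hπ
      _ ≤ π * α ^ p := mul_le_mul_of_nonneg_left hα hπ0

end IsWCB

theorem row_variance_bound_general {n m d : ℕ} (A : Matrix (Fin n) (Fin m) ℝ)
    (U : Matrix (Fin n) (Fin d) ℝ) (τ : Matrix (Fin d) (Fin m) ℝ)
    (p α β r : ℝ) (i : Fin n) (pi : ℝ)
    (hp : 1 ≤ p) (hA : A = U * τ) (hU : IsWCB p α β A U)
    (hr : 0 < r) (hpi0 : 0 < pi)
    (hpi : r * pnorm p (U i) ^ p / mpnorm p U ^ p ≤ pi) :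
    ∀ x : Fin m → ℝ,
      |A.mulVec x i| ^ p / pi ≤ (α * β) ^ p * pnorm p (A.mulVec x) ^ p / r := by
  intro x
  have hp0 : 0 < p := zero_lt_one.trans_le hp
  rcases (pnorm_nonneg p (A *ᵥ x)).eq_or_lt with hN | hN
  · have hAxi : |(A *ᵥ x) i| ^ p ≤ 0 := by
      simpa [← hN, Real.zero_rpow hp0.ne'] using abs_rpow_le_pnorm_rpow hp0.ne' (A *ᵥ x) i
    rw [← hN, Real.zero_rpow hp0.ne', mul_zero, zero_div]
    exact div_nonpos_of_nonpos_of_nonneg hAxi hpi0.le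
  have hα := hU.alpha_nonneg
  have hβ : 0 ≤ β := hU.beta_nonneg (z := τ *ᵥ x) (by rwa [mulVec_mulVec, ← hA])
  have hrow := hU.abs_mulVec_apply_le hp hA x i
  have hUi := hU.mul_pnorm_row_rpow_le hp0 hpi hpi0.le
  rw [div_le_div_iff₀ hpi0 hr, Real.mul_rpow hα hβ]
  calc |(A *ᵥ x) i| ^ p * r
      ≤ (pnorm p (U i) * (β * pnorm p (A *ᵥ x))) ^ p * r := by gcongr
    _ = r * pnorm p (U i) ^ p * (β ^ p * pnorm p (A *ᵥ x) ^ p) := by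
      rw [Real.mul_rpow (pnorm_nonneg _ _) (mul_nonneg hβ hN.le), Real.mul_rpow hβ hN.le]; ring
    _ ≤ pi * α ^ p * (β ^ p * pnorm p (A *ᵥ x) ^ p) := by gcongr
    _ = α ^ p * β ^ p * pnorm p (A *ᵥ x) ^ p * pi := by ring

/-- **Variance bound from well-conditioning (Equation (12)).**
Suppose `A = U * τ`, where `U` is an `(α, β, p)`-well-conditioned basis for the column space
of the `n × m` matrix `A` and `τ` is `d × m`.  If `p_i ∈ (0, 1)` satisfies
`p_i ≥ r ‖U_(i)‖_p^p / |||U|||_p^p` for some `r > 0`, then for every `x ∈ ℝᵐ`,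
`|A_(i) x|^p / p_i ≤ (αβ)^p ‖A x‖_p^p / r`. -/
theorem row_variance_bound {n m d : ℕ} (A : Matrix (Fin n) (Fin m) ℝ)
    (U : Matrix (Fin n) (Fin d) ℝ) (τ : Matrix (Fin d) (Fin m) ℝ)
    (p α β r : ℝ) (i : Fin n) (pi : ℝ)
    (hp : 1 ≤ p) (hA : A = U * τ) (hU : IsWCB p α β A U)
    (hr : 0 < r) (hpi0 : 0 < pi) (hpi1 : pi < 1)
    (hpi : r * pnorm p (U i) ^ p / mpnorm p U ^ p ≤ pi) :
    ∀ x : Fin m → ℝ,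
      |A.mulVec x i| ^ p / pi ≤ (α * β) ^ p * pnorm p (A.mulVec x) ^ p / r :=
  row_variance_bound_general A U τ p α β r i pi hp hA hU hr hpi0 hpi
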